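/- If Λ is a finite nonempty set of intuitionistic formulas closed under subformulas, then iPLV(Λ) = iPLV'(Λ). -/
import Mathlib


/-- Intuitionistic formulas over signature Ω = {¬, →, ∨, ∧}. -/
inductive IF
  | var : ℕ → IF
  | neg : IF → IF
  | imp : IF → IF → IF
  | dis : IF → IF → IF
  | con : IF → IF → IF
deriving DecidableEq

/-- The three intuitionistic truth values F, U, T. -/
inductive VI
  | F | U | T
deriving DecidableEq

def inegOp : VI → Set VI
  | .F => {.U, .T}
  | .U => {.U, .T}
  | .T => {.F}

def iimpOp : VI → VI → Set VI
  | .T, .T => {.T}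
  | .T, _ => {.F}
  | _, .T => {.T}
  | _, _ => {.U, .T}

def idisOp : VI → VI → Set VI
  | .T, _ => {.T}
  | _, .T => {.T}
  | _, _ => {.F}

def iconOp : VI → VI → Set VI
  | .T, .T => {.T}
  | _, _ => {.F}

/-- Valuations over the Nmatrix M_IPL. -/
def IsValI (v : IF → VI) : Prop :=
  (∀ α, v (.neg α) ∈ inegOp (v α)) ∧
  (∀ α β, v (.imp α β) ∈ iimpOp (v α) (v β)) ∧
  (∀ α β, v (.dis α β) ∈ idisOp (v α) (v β)) ∧
  (∀ α β, v (.con α β) ∈ iconOp (v α) (v β))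

/-- Val₊(M_IPL): valuations taking only values T, F on propositional variables. -/
def ValPlus : Set (IF → VI) :=
  {v | IsValI v ∧ ∀ n, v (.var n) = VI.T ∨ v (.var n) = VI.F}

/-- Complexity of an intuitionistic formula. -/
def co : IF → ℕ
  | .var _ => 0
  | .neg α => co α + 1
  | .imp α β => co α + co β + 1
  | .dis α β => co α + co β + 1
  | .con α β => co α + co β + 1

/-- The levels L_k for IPL. -/
def LevelI : ℕ → Set (IF → VI)
  | 0 => ValPlus
  | (k+1) => {v ∈ LevelI k | ∀ α, co α ≤ k + 1 → v α = VI.U →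
      ∃ w ∈ LevelI k, w α = VI.F ∧ ∀ β, v β = VI.T → w β = VI.T}

/-- Intuitionistic level valuations L_IPL = ⋂_{k ≥ 0} L_k. -/
def LIPL : Set (IF → VI) := ⋂ k, LevelI k

/-- The consequence relation Γ ⊢_IPL φ of the Hilbert calculus H_IPL. -/
inductive IDeriv (Γ : Set IF) : IF → Prop
  | prem {φ : IF} : φ ∈ Γ → IDeriv Γ φ
  | ax1 (α β : IF) : IDeriv Γ (α.imp (β.imp α))
  | ax2 (α β γ : IF) : IDeriv Γ ((α.imp (β.imp γ)).imp ((α.imp β).imp (α.imp γ)))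
  | ax3 (α β : IF) : IDeriv Γ (α.imp (β.imp (α.con β)))
  | ax4 (α β : IF) : IDeriv Γ ((α.con β).imp α)
  | ax5 (α β : IF) : IDeriv Γ ((α.con β).imp β)
  | ax6 (α β : IF) : IDeriv Γ (α.imp (α.dis β))
  | ax7 (α β : IF) : IDeriv Γ (β.imp (α.dis β))
  | ax8 (α β γ : IF) : IDeriv Γ ((α.imp γ).imp ((β.imp γ).imp ((α.dis β).imp γ)))
  | ax9 (α β : IF) : IDeriv Γ ((β.imp α).imp ((β.imp α.neg).imp β.neg))
  | ax10 (α β : IF) : IDeriv Γ (α.imp (α.neg.imp β))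
  | mp {α β : IF} : IDeriv Γ (α.imp β) → IDeriv Γ α → IDeriv Γ β

/-- Δ is φ-saturated (w.r.t. ⊢_IPL). -/
def ISat (Δ : Set IF) (φ : IF) : Prop :=
  ¬ IDeriv Δ φ ∧ ∀ α ∉ Δ, IDeriv (insert α Δ) φ

open Classical in
/-- The valuation v_Δ associated to a φ-saturated set Δ in IPL. -/
noncomputable def vDeltaI (Δ : Set IF) : IF → VI
  | .var n => if IF.var n ∈ Δ then VI.T else VI.F
  | .neg α => if IF.neg α ∈ Δ then VI.T else if α ∈ Δ then VI.F else VI.U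
  | .imp α β => if IF.imp α β ∈ Δ then VI.T else if α ∈ Δ then VI.F else VI.U
  | .con α β => if α ∈ Δ ∧ β ∈ Δ then VI.T else VI.F
  | .dis α β => if α ∈ Δ ∨ β ∈ Δ then VI.T else VI.F

/-- Λ is closed under (immediate, hence all) subformulas. -/
def SubClosedI (Λ : Set IF) : Prop :=
  (∀ α, IF.neg α ∈ Λ → α ∈ Λ) ∧
  (∀ α β, IF.imp α β ∈ Λ → α ∈ Λ ∧ β ∈ Λ) ∧
  (∀ α β, IF.dis α β ∈ Λ → α ∈ Λ ∧ β ∈ Λ) ∧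
  (∀ α β, IF.con α β ∈ Λ → α ∈ Λ ∧ β ∈ Λ)

/-- Intuitionistic partial valuations with domain Λ (modelled as total functions
constrained on Λ). -/
def IsPValI (Λ : Set IF) (v : IF → VI) : Prop :=
  (∀ n, IF.var n ∈ Λ → v (.var n) = VI.T ∨ v (.var n) = VI.F) ∧
  (∀ α, IF.neg α ∈ Λ → v (.neg α) ∈ inegOp (v α)) ∧
  (∀ α β, IF.imp α β ∈ Λ → v (.imp α β) ∈ iimpOp (v α) (v β)) ∧
  (∀ α β, IF.dis α β ∈ Λ → v (.dis α β) ∈ idisOp (v α) (v β)) ∧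
  (∀ α β, IF.con α β ∈ Λ → v (.con α β) ∈ iconOp (v α) (v β))

/-- iPLV'(Λ): intuitionistic partial' level valuations over Λ. -/
def iPLV' (Λ : Set IF) : Set (IF → VI) :=
  {v | IsPValI Λ v ∧ ∀ α ∈ Λ, v α = VI.U →
    ∃ w ∈ LIPL, w α = VI.F ∧ ∀ β ∈ Λ, v β = VI.T → w β = VI.T}

/-- iPLV(Λ): intuitionistic partial level valuations over Λ, defined as the largest
subset of iPV(Λ) whose condition is witnessed inside itself. -/
def iPLV (Λ : Set IF) : Set (IF → VI) :=
  ⋃₀ {S | (∀ v ∈ S, IsPValI Λ v) ∧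
      ∀ v ∈ S, ∀ α ∈ Λ, v α = VI.U →
        ∃ w ∈ S, w α = VI.F ∧ ∀ β ∈ Λ, v β = VI.T → w β = VI.T}

/-- Set of subformulas of an intuitionistic formula. -/
def IF.subf : IF → Finset IF
  | .var n => {.var n}
  | .neg α => insert (.neg α) α.subf
  | .imp α β => insert (.imp α β) (α.subf ∪ β.subf)
  | .dis α β => insert (.dis α β) (α.subf ∪ β.subf)
  | .con α β => insert (.con α β) (α.subf ∪ β.subf)

/-- Γ ⊨_iPLV φ : consequence w.r.t. the intuitionistic truth tables, over the set Λ
of subformulas of Γ ∪ {φ}. -/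
def iPLVConseq (Γ : Finset IF) (φ : IF) : Prop :=
  ∀ v ∈ iPLV (↑(Γ.biUnion IF.subf ∪ φ.subf) : Set IF),
    (∀ β ∈ Γ, v β = VI.T) → v φ = VI.T


/-! ### Auxiliary development -/

instance : Fintype VI := ⟨{.F, .U, .T}, fun x => by cases x <;> simp⟩

section Tables

lemma ineg_ne_T {x : VI} (h : x ≠ VI.T) : VI.U ∈ inegOp x ∧ VI.T ∈ inegOp x := by
  cases x <;> simp_all [inegOp]

lemma ineg_mem_F : VI.F ∈ inegOp VI.T := by simp [inegOp]

lemma ineg_F' {x : VI} (hm : VI.F ∈ inegOp x) : x = VI.T := by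
  cases x <;> simp_all [inegOp]

lemma ineg_U' {x : VI} (hm : VI.U ∈ inegOp x) : x ≠ VI.T := by
  cases x <;> simp_all [inegOp]

lemma ineg_T' {x : VI} (hm : VI.T ∈ inegOp x) : x ≠ VI.T := by
  cases x <;> simp_all [inegOp]

lemma iimp_mem_T_right (x : VI) : VI.T ∈ iimpOp x VI.T := by
  cases x <;> simp [iimpOp]

lemma iimp_mem_F {y : VI} (h : y ≠ VI.T) : VI.F ∈ iimpOp VI.T y := by
  cases y <;> simp_all [iimpOp]

lemma iimp_ne_T {x y : VI} (hx : x ≠ VI.T) (hy : y ≠ VI.T) :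
    VI.U ∈ iimpOp x y ∧ VI.T ∈ iimpOp x y := by
  cases x <;> cases y <;> simp_all [iimpOp]

lemma iimp_F' {x y : VI} (hm : VI.F ∈ iimpOp x y) : x = VI.T ∧ y ≠ VI.T := by
  cases x <;> cases y <;> simp_all [iimpOp]

lemma iimp_U' {x y : VI} (hm : VI.U ∈ iimpOp x y) : x ≠ VI.T ∧ y ≠ VI.T := by
  cases x <;> cases y <;> simp_all [iimpOp]

lemma iimp_T_of_T {y z : VI} (hm : z ∈ iimpOp VI.T y) (hz : z = VI.T) : y = VI.T := by
  cases y <;> simp_all [iimpOp]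

lemma idis_mem_T {x y : VI} (h : x = VI.T ∨ y = VI.T) : VI.T ∈ idisOp x y := by
  cases x <;> cases y <;> simp_all [idisOp]

lemma idis_mem_F {x y : VI} (hx : x ≠ VI.T) (hy : y ≠ VI.T) : VI.F ∈ idisOp x y := by
  cases x <;> cases y <;> simp_all [idisOp]

lemma idis_T' {x y z : VI} (hm : z ∈ idisOp x y) :
    (z = VI.T ↔ (x = VI.T ∨ y = VI.T)) := by
  cases x <;> cases y <;> simp_all [idisOp]

lemma idis_no_U {x y : VI} (hm : VI.U ∈ idisOp x y) : False := by
  cases x <;> cases y <;> simp_all [idisOp]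

lemma icon_mem_T {x y : VI} (hx : x = VI.T) (hy : y = VI.T) : VI.T ∈ iconOp x y := by
  subst hx; subst hy; simp [iconOp]

lemma icon_mem_F {x y : VI} (h : ¬ (x = VI.T ∧ y = VI.T)) : VI.F ∈ iconOp x y := by
  cases x <;> cases y <;> simp_all [iconOp]

lemma icon_T' {x y z : VI} (hm : z ∈ iconOp x y) :
    (z = VI.T ↔ (x = VI.T ∧ y = VI.T)) := by
  cases x <;> cases y <;> simp_all [iconOp]

lemma icon_no_U {x y : VI} (hm : VI.U ∈ iconOp x y) : False := by
  cases x <;> cases y <;> simp_all [iconOp]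

end Tables

/-- The preorder on (partial) valuations: `w` preserves all `Λ`-truths of `u`. -/
def Fle (Λ : Set IF) (u w : IF → VI) : Prop := ∀ β ∈ Λ, u β = VI.T → w β = VI.T

lemma Fle.rfl {Λ : Set IF} {u : IF → VI} : Fle Λ u u := fun _ _ h => h

lemma Fle.trans' {Λ : Set IF} {u v w : IF → VI} (h1 : Fle Λ u v) (h2 : Fle Λ v w) :
    Fle Λ u w := fun β hβ h => h2 β hβ (h1 β hβ h)

/-- Kripke forcing over the frame `S` ordered by `Fle Λ`. -/
def Force (S : Set (IF → VI)) (Λ : Set IF) : IF → (IF → VI) → Prop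
  | .var n, u => IF.var n ∈ Λ ∧ u (.var n) = VI.T
  | .neg α, u => ∀ w ∈ S, Fle Λ u w → ¬ Force S Λ α w
  | .imp α β, u => ∀ w ∈ S, Fle Λ u w → Force S Λ α w → Force S Λ β w
  | .dis α β, u => Force S Λ α u ∨ Force S Λ β u
  | .con α β, u => Force S Λ α u ∧ Force S Λ β u

lemma force_mono (S : Set (IF → VI)) (Λ : Set IF) (γ : IF) :
    ∀ {u w : IF → VI}, Fle Λ u w → Force S Λ γ u → Force S Λ γ w := by
  induction γ with
  | var n => exact fun hle h => ⟨h.1, hle _ h.1 h.2⟩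
  | neg α ih => exact fun hle h x hx hlex => h x hx (hle.trans' hlex)
  | imp α β ihα ihβ => exact fun hle h x hx hlex => h x hx (hle.trans' hlex)
  | dis α β ihα ihβ => exact fun hle h => h.imp (ihα hle) (ihβ hle)
  | con α β ihα ihβ => exact fun hle h => ⟨ihα hle h.1, ihβ hle h.2⟩

open Classical in
/-- The total valuation determined by forcing at world `u`. -/
noncomputable def Vv (S : Set (IF → VI)) (Λ : Set IF) (u : IF → VI) : IF → VI
  | .var n => if Force S Λ (.var n) u then VI.T else VI.F
  | .neg α => if Force S Λ (.neg α) u then VI.T else if Force S Λ α u then VI.F else VI.U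
  | .imp α β =>
      if Force S Λ (.imp α β) u then VI.T else if Force S Λ α u then VI.F else VI.U
  | .dis α β => if Force S Λ (.dis α β) u then VI.T else VI.F
  | .con α β => if Force S Λ (.con α β) u then VI.T else VI.F

open Classical in
lemma Vv_var (S : Set (IF → VI)) (Λ : Set IF) (u : IF → VI) (n : ℕ) :
    Vv S Λ u (.var n) = if Force S Λ (.var n) u then VI.T else VI.F := rfl

open Classical in
lemma Vv_neg (S : Set (IF → VI)) (Λ : Set IF) (u : IF → VI) (α : IF) :
    Vv S Λ u (.neg α) =
      if Force S Λ (.neg α) u then VI.T else if Force S Λ α u then VI.F else VI.U := rfl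

open Classical in
lemma Vv_imp (S : Set (IF → VI)) (Λ : Set IF) (u : IF → VI) (α β : IF) :
    Vv S Λ u (.imp α β) =
      if Force S Λ (.imp α β) u then VI.T else if Force S Λ α u then VI.F else VI.U := rfl

open Classical in
lemma Vv_dis (S : Set (IF → VI)) (Λ : Set IF) (u : IF → VI) (α β : IF) :
    Vv S Λ u (.dis α β) = if Force S Λ (.dis α β) u then VI.T else VI.F := rfl

open Classical in
lemma Vv_con (S : Set (IF → VI)) (Λ : Set IF) (u : IF → VI) (α β : IF) :
    Vv S Λ u (.con α β) = if Force S Λ (.con α β) u then VI.T else VI.F := rfl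

lemma Vv_eq_T_iff (S : Set (IF → VI)) (Λ : Set IF) (u : IF → VI) (γ : IF) :
    Vv S Λ u γ = VI.T ↔ Force S Λ γ u := by
  cases γ with
  | var n => rw [Vv_var]; split_ifs with h <;> simp_all
  | neg α => rw [Vv_neg]; split_ifs with h h2 <;> simp_all
  | imp α β => rw [Vv_imp]; split_ifs with h h2 <;> simp_all
  | dis α β => rw [Vv_dis]; split_ifs with h <;> simp_all
  | con α β => rw [Vv_con]; split_ifs with h <;> simp_all

/-- `S` is a "good" set of partial valuations (the condition in `iPLV`). -/
def GoodS (S : Set (IF → VI)) (Λ : Set IF) : Prop :=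
  (∀ v ∈ S, IsPValI Λ v) ∧
    ∀ v ∈ S, ∀ α ∈ Λ, v α = VI.U →
      ∃ w ∈ S, w α = VI.F ∧ ∀ β ∈ Λ, v β = VI.T → w β = VI.T

lemma Vv_isVal (S : Set (IF → VI)) (Λ : Set IF) {u : IF → VI} (hu : u ∈ S) :
    IsValI (Vv S Λ u) := by
  refine ⟨?_, ?_, ?_, ?_⟩
  · intro α
    by_cases h1 : Force S Λ (.neg α) u <;> by_cases h2 : Force S Λ α u
    · exact absurd h2 (h1 u hu Fle.rfl)
    · have hne : Vv S Λ u α ≠ VI.T := by rw [Ne, Vv_eq_T_iff]; exact h2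
      rw [Vv_neg, if_pos h1]
      exact (ineg_ne_T hne).2
    · have hT : Vv S Λ u α = VI.T := (Vv_eq_T_iff S Λ u α).mpr h2
      rw [Vv_neg, if_neg h1, if_pos h2, hT]
      exact ineg_mem_F
    · have hne : Vv S Λ u α ≠ VI.T := by rw [Ne, Vv_eq_T_iff]; exact h2
      rw [Vv_neg, if_neg h1, if_neg h2]
      exact (ineg_ne_T hne).1
  · intro α β
    by_cases h2 : Force S Λ α u <;> by_cases h3 : Force S Λ β u
    · have h1 : Force S Λ (.imp α β) u := fun w hw hle _ => force_mono S Λ β hle h3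
      have hα : Vv S Λ u α = VI.T := (Vv_eq_T_iff S Λ u α).mpr h2
      have hβ : Vv S Λ u β = VI.T := (Vv_eq_T_iff S Λ u β).mpr h3
      rw [Vv_imp, if_pos h1, hα, hβ]
      exact iimp_mem_T_right _
    · have h1 : ¬ Force S Λ (.imp α β) u := fun h => h3 (h u hu Fle.rfl h2)
      have hα : Vv S Λ u α = VI.T := (Vv_eq_T_iff S Λ u α).mpr h2
      have hβ : Vv S Λ u β ≠ VI.T := by rw [Ne, Vv_eq_T_iff]; exact h3
      rw [Vv_imp, if_neg h1, if_pos h2, hα]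
      exact iimp_mem_F hβ
    · have h1 : Force S Λ (.imp α β) u := fun w hw hle _ => force_mono S Λ β hle h3
      have hβ : Vv S Λ u β = VI.T := (Vv_eq_T_iff S Λ u β).mpr h3
      rw [Vv_imp, if_pos h1, hβ]
      exact iimp_mem_T_right _
    · have hα : Vv S Λ u α ≠ VI.T := by rw [Ne, Vv_eq_T_iff]; exact h2
      have hβ : Vv S Λ u β ≠ VI.T := by rw [Ne, Vv_eq_T_iff]; exact h3
      by_cases h1 : Force S Λ (.imp α β) u
      · rw [Vv_imp, if_pos h1]; exact (iimp_ne_T hα hβ).2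
      · rw [Vv_imp, if_neg h1, if_neg h2]; exact (iimp_ne_T hα hβ).1
  · intro α β
    by_cases h1 : Force S Λ (.dis α β) u
    · have hor : Vv S Λ u α = VI.T ∨ Vv S Λ u β = VI.T := by
        rw [Vv_eq_T_iff, Vv_eq_T_iff]; exact h1
      rw [Vv_dis, if_pos h1]
      exact idis_mem_T hor
    · have h2 : ¬ Force S Λ α u := fun h => h1 (Or.inl h)
      have h3 : ¬ Force S Λ β u := fun h => h1 (Or.inr h)
      have hα : Vv S Λ u α ≠ VI.T := by rw [Ne, Vv_eq_T_iff]; exact h2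
      have hβ : Vv S Λ u β ≠ VI.T := by rw [Ne, Vv_eq_T_iff]; exact h3
      rw [Vv_dis, if_neg h1]
      exact idis_mem_F hα hβ
  · intro α β
    by_cases h1 : Force S Λ (.con α β) u
    · have hα : Vv S Λ u α = VI.T := (Vv_eq_T_iff S Λ u α).mpr h1.1
      have hβ : Vv S Λ u β = VI.T := (Vv_eq_T_iff S Λ u β).mpr h1.2
      rw [Vv_con, if_pos h1]
      exact icon_mem_T hα hβ
    · rw [Vv_con, if_neg h1]
      refine icon_mem_F ?_
      rintro ⟨hα, hβ⟩
      exact h1 ⟨(Vv_eq_T_iff S Λ u α).mp hα, (Vv_eq_T_iff S Λ u β).mp hβ⟩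

lemma Vv_mem_level (S : Set (IF → VI)) (Λ : Set IF) (hG : GoodS S Λ) :
    ∀ k, ∀ u ∈ S, Vv S Λ u ∈ LevelI k := by
  intro k
  induction k with
  | zero =>
    intro u hu
    refine ⟨Vv_isVal S Λ hu, fun n => ?_⟩
    by_cases h : Force S Λ (.var n) u <;> simp [Vv_var, h]
  | succ k ih =>
    intro u hu
    refine ⟨ih u hu, ?_⟩
    intro α hco hU
    match α with
    | .var n => rw [Vv_var] at hU; split_ifs at hU <;> simp_all
    | .dis α β => rw [Vv_dis] at hU; split_ifs at hU <;> simp_all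
    | .con α β => rw [Vv_con] at hU; split_ifs at hU <;> simp_all
    | .neg α =>
      rw [Vv_neg] at hU
      split_ifs at hU with h1 h2
      have h1' : ∃ w ∈ S, Fle Λ u w ∧ Force S Λ α w := by
        by_contra hc
        push_neg at hc
        exact h1 (fun w hw hle => hc w hw hle)
      obtain ⟨w, hwS, hlew, hfα⟩ := h1'
      have hnw : ¬ Force S Λ (.neg α) w := fun h => h w hwS Fle.rfl hfα
      refine ⟨Vv S Λ w, ih w hwS, ?_, ?_⟩
      · rw [Vv_neg, if_neg hnw, if_pos hfα]
      · intro δ hδ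
        rw [Vv_eq_T_iff] at hδ ⊢
        exact force_mono S Λ δ hlew hδ
    | .imp α β =>
      rw [Vv_imp] at hU
      split_ifs at hU with h1 h2
      have h1' : ∃ w ∈ S, Fle Λ u w ∧ Force S Λ α w ∧ ¬ Force S Λ β w := by
        by_contra hc
        push_neg at hc
        exact h1 (fun w hw hle hα => hc w hw hle hα)
      obtain ⟨w, hwS, hlew, hfα, hfβ⟩ := h1'
      have hnw : ¬ Force S Λ (.imp α β) w := fun h => hfβ (h w hwS Fle.rfl hfα)
      refine ⟨Vv S Λ w, ih w hwS, ?_, ?_⟩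
      · rw [Vv_imp, if_neg hnw, if_pos hfα]
      · intro δ hδ
        rw [Vv_eq_T_iff] at hδ ⊢
        exact force_mono S Λ δ hlew hδ

lemma force_iff (S : Set (IF → VI)) (Λ : Set IF) (hcl : SubClosedI Λ) (hG : GoodS S Λ) :
    ∀ γ ∈ Λ, ∀ u ∈ S, (Force S Λ γ u ↔ u γ = VI.T) := by
  intro γ
  induction γ with
  | var n =>
    intro hγ u hu
    exact ⟨fun h => h.2, fun h => ⟨hγ, h⟩⟩
  | neg α ih =>
    intro hγ u hu
    have hαΛ : α ∈ Λ := hcl.1 α hγ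
    constructor
    · intro h
      by_contra hne
      have hm := (hG.1 u hu).2.1 α hγ
      rcases hv : u (.neg α) with _ | _ | _
      · rw [hv] at hm
        have hαT := ineg_F' hm
        exact h u hu Fle.rfl ((ih hαΛ u hu).mpr hαT)
      · obtain ⟨w, hwS, hwF, hwT⟩ := hG.2 u hu (.neg α) hγ hv
        have hmw := (hG.1 w hwS).2.1 α hγ
        rw [hwF] at hmw
        have hαT := ineg_F' hmw
        exact h w hwS hwT ((ih hαΛ w hwS).mpr hαT)
      · exact hne hv
    · intro hT w hwS hlew hfa
      have hwn : w (.neg α) = VI.T := hlew _ hγ hT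
      have hmw := (hG.1 w hwS).2.1 α hγ
      rw [hwn] at hmw
      exact ineg_T' hmw ((ih hαΛ w hwS).mp hfa)
  | imp α β ihα ihβ =>
    intro hγ u hu
    have hαΛ : α ∈ Λ := (hcl.2.1 α β hγ).1
    have hβΛ : β ∈ Λ := (hcl.2.1 α β hγ).2
    constructor
    · intro h
      by_contra hne
      have hm := (hG.1 u hu).2.2.1 α β hγ
      rcases hv : u (.imp α β) with _ | _ | _
      · rw [hv] at hm
        obtain ⟨hαT, hβne⟩ := iimp_F' hm
        exact hβne ((ihβ hβΛ u hu).mp (h u hu Fle.rfl ((ihα hαΛ u hu).mpr hαT)))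
      · obtain ⟨w, hwS, hwF, hwT⟩ := hG.2 u hu (.imp α β) hγ hv
        have hmw := (hG.1 w hwS).2.2.1 α β hγ
        rw [hwF] at hmw
        obtain ⟨hαT, hβne⟩ := iimp_F' hmw
        exact hβne ((ihβ hβΛ w hwS).mp (h w hwS hwT ((ihα hαΛ w hwS).mpr hαT)))
      · exact hne hv
    · intro hT w hwS hlew hfa
      have hwi : w (.imp α β) = VI.T := hlew _ hγ hT
      have hmw := (hG.1 w hwS).2.2.1 α β hγ
      have hαT : w α = VI.T := (ihα hαΛ w hwS).mp hfa
      rw [hαT] at hmw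
      exact (ihβ hβΛ w hwS).mpr (iimp_T_of_T hmw hwi)
  | dis α β ihα ihβ =>
    intro hγ u hu
    have hαΛ : α ∈ Λ := (hcl.2.2.1 α β hγ).1
    have hβΛ : β ∈ Λ := (hcl.2.2.1 α β hγ).2
    have hm := (hG.1 u hu).2.2.2.1 α β hγ
    rw [show (Force S Λ (.dis α β) u) = (Force S Λ α u ∨ Force S Λ β u) from rfl]
    rw [ihα hαΛ u hu, ihβ hβΛ u hu]
    exact (idis_T' hm).symm
  | con α β ihα ihβ =>
    intro hγ u hu
    have hαΛ : α ∈ Λ := (hcl.2.2.2 α β hγ).1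
    have hβΛ : β ∈ Λ := (hcl.2.2.2 α β hγ).2
    have hm := (hG.1 u hu).2.2.2.2 α β hγ
    rw [show (Force S Λ (.con α β) u) = (Force S Λ α u ∧ Force S Λ β u) from rfl]
    rw [ihα hαΛ u hu, ihβ hβΛ u hu]
    exact (icon_T' hm).symm

lemma Vv_agree (S : Set (IF → VI)) (Λ : Set IF) (hcl : SubClosedI Λ) (hG : GoodS S Λ)
    {u : IF → VI} (hu : u ∈ S) : ∀ γ ∈ Λ, Vv S Λ u γ = u γ := by
  intro γ hγ
  match γ with
  | .var n =>
    rcases (hG.1 u hu).1 n hγ with hT | hF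
    · rw [hT]
      exact (Vv_eq_T_iff S Λ u _).mpr ⟨hγ, hT⟩
    · have hnf : ¬ Force S Λ (.var n) u := fun h => absurd (h.2.symm.trans hF) (by simp)
      rw [Vv_var, if_neg hnf, hF]
  | .neg α =>
    have hαΛ : α ∈ Λ := hcl.1 α hγ
    have hiff := force_iff S Λ hcl hG (.neg α) hγ u hu
    have hm := (hG.1 u hu).2.1 α hγ
    rcases hv : u (.neg α) with _ | _ | _
    · rw [hv] at hm
      have hαT := ineg_F' hm
      have hfα : Force S Λ α u := (force_iff S Λ hcl hG α hαΛ u hu).mpr hαT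
      have hnf : ¬ Force S Λ (.neg α) u := fun h => by
        have h2 := hiff.mp h; rw [hv] at h2; exact absurd h2 (by simp)
      rw [Vv_neg, if_neg hnf, if_pos hfα]
    · rw [hv] at hm
      have hαne := ineg_U' hm
      have hnfα : ¬ Force S Λ α u := fun h => hαne ((force_iff S Λ hcl hG α hαΛ u hu).mp h)
      have hnf : ¬ Force S Λ (.neg α) u := fun h => by
        have h2 := hiff.mp h; rw [hv] at h2; exact absurd h2 (by simp)
      rw [Vv_neg, if_neg hnf, if_neg hnfα]
    · have hf := hiff.mpr hv
      rw [Vv_neg, if_pos hf]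
  | .imp α β =>
    have hαΛ : α ∈ Λ := (hcl.2.1 α β hγ).1
    have hiff := force_iff S Λ hcl hG (.imp α β) hγ u hu
    have hm := (hG.1 u hu).2.2.1 α β hγ
    rcases hv : u (.imp α β) with _ | _ | _
    · rw [hv] at hm
      have hαT := (iimp_F' hm).1
      have hfα : Force S Λ α u := (force_iff S Λ hcl hG α hαΛ u hu).mpr hαT
      have hnf : ¬ Force S Λ (.imp α β) u := fun h => by
        have h2 := hiff.mp h; rw [hv] at h2; exact absurd h2 (by simp)
      rw [Vv_imp, if_neg hnf, if_pos hfα]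
    · rw [hv] at hm
      have hαne := (iimp_U' hm).1
      have hnfα : ¬ Force S Λ α u := fun h => hαne ((force_iff S Λ hcl hG α hαΛ u hu).mp h)
      have hnf : ¬ Force S Λ (.imp α β) u := fun h => by
        have h2 := hiff.mp h; rw [hv] at h2; exact absurd h2 (by simp)
      rw [Vv_imp, if_neg hnf, if_neg hnfα]
    · have hf := hiff.mpr hv
      rw [Vv_imp, if_pos hf]
  | .dis α β =>
    have hiff := force_iff S Λ hcl hG (.dis α β) hγ u hu
    have hm := (hG.1 u hu).2.2.2.1 α β hγ
    rcases hv : u (.dis α β) with _ | _ | _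
    · have hnf : ¬ Force S Λ (.dis α β) u := fun h => by
        have h2 := hiff.mp h; rw [hv] at h2; exact absurd h2 (by simp)
      rw [Vv_dis, if_neg hnf]
    · rw [hv] at hm; exact absurd hm (fun h => idis_no_U h)
    · have hf := hiff.mpr hv
      rw [Vv_dis, if_pos hf]
  | .con α β =>
    have hiff := force_iff S Λ hcl hG (.con α β) hγ u hu
    have hm := (hG.1 u hu).2.2.2.2 α β hγ
    rcases hv : u (.con α β) with _ | _ | _
    · have hnf : ¬ Force S Λ (.con α β) u := fun h => by
        have h2 := hiff.mp h; rw [hv] at h2; exact absurd h2 (by simp)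
      rw [Vv_con, if_neg hnf]
    · rw [hv] at hm; exact absurd hm (fun h => icon_no_U h)
    · have hf := hiff.mpr hv
      rw [Vv_con, if_pos hf]

lemma LevelI_succ_subset (k : ℕ) : LevelI (k + 1) ⊆ LevelI k := fun _ hv => hv.1

lemma LevelI_antitone {k m : ℕ} (h : k ≤ m) : LevelI m ⊆ LevelI k := by
  induction h with
  | refl => exact subset_rfl
  | step h ih => exact fun v hv => ih (LevelI_succ_subset _ hv)

lemma isPVal_of_mem_ValPlus (Λ : Set IF) {v : IF → VI} (h : v ∈ ValPlus) :
    IsPValI Λ v :=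
  ⟨fun n _ => h.2 n, fun α _ => h.1.1 α, fun α β _ => h.1.2.1 α β,
    fun α β _ => h.1.2.2.1 α β, fun α β _ => h.1.2.2.2 α β⟩

/-- The compactness set `S₀`: partial valuations whose `U`-formulas have witnesses
at every finite level. -/
def S0 (Λ : Set IF) : Set (IF → VI) :=
  {v | IsPValI Λ v ∧ ∀ α ∈ Λ, v α = VI.U → ∀ k,
    ∃ w ∈ LevelI k, w α = VI.F ∧ ∀ β ∈ Λ, v β = VI.T → w β = VI.T}

lemma LIPL_subset_S0 (Λ : Set IF) : LIPL ⊆ S0 Λ := by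
  intro u hu
  have h0 : u ∈ LevelI 0 := Set.mem_iInter.mp hu 0
  refine ⟨isPVal_of_mem_ValPlus Λ h0, ?_⟩
  intro α hα hU k
  have hk1 : u ∈ LevelI (max k (co α) + 1) := Set.mem_iInter.mp hu _
  obtain ⟨w, hw, hwF, hwT⟩ :=
    hk1.2 α (le_trans (le_max_right k (co α)) (Nat.le_succ _)) hU
  exact ⟨w, LevelI_antitone (le_max_left k (co α)) hw, hwF, fun β _ hT => hwT β hT⟩

lemma S0_closed (Λ : Set IF) (hfin : Λ.Finite) :
    ∀ v ∈ S0 Λ, ∀ α ∈ Λ, v α = VI.U →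
      ∃ w ∈ S0 Λ, w α = VI.F ∧ ∀ β ∈ Λ, v β = VI.T → w β = VI.T := by
  intro v hv α hα hU
  choose w hwL hwF hwT using hv.2 α hα hU
  haveI := hfin.to_subtype
  set f : ℕ → (Λ → VI) := fun k (b : Λ) => w k b with hf
  obtain ⟨r, hr⟩ := Finite.exists_infinite_fiber f
  have hinf : (f ⁻¹' {r}).Infinite := Set.infinite_coe_iff.mp hr
  obtain ⟨K₀, hK₀⟩ := hinf.nonempty
  have heqval : ∀ K ∈ f ⁻¹' {r}, ∀ β (hβ : β ∈ Λ), w K β = w K₀ β := by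
    intro K hK β hβ
    have h1 : f K = r := hK
    have h2 : f K₀ = r := hK₀
    exact congrFun (h1.trans h2.symm) ⟨β, hβ⟩
  refine ⟨w K₀, ⟨isPVal_of_mem_ValPlus Λ (LevelI_antitone (Nat.zero_le K₀) (hwL K₀)), ?_⟩,
    hwF K₀, hwT K₀⟩
  intro γ hγ hUγ k
  obtain ⟨K, hKmem, hKgt⟩ := hinf.exists_gt (max k (co γ))
  have hmem : w K ∈ LevelI (max k (co γ) + 1) := LevelI_antitone hKgt (hwL K)
  obtain ⟨w', hw'L, hw'F, hw'T⟩ :=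
    hmem.2 γ (le_trans (le_max_right k (co γ)) (Nat.le_succ _))
      ((heqval K hKmem γ hγ).trans hUγ)
  exact ⟨w', LevelI_antitone (le_max_left k (co γ)) hw'L, hw'F,
    fun β hβ hT => hw'T β (by rw [heqval K hKmem β hβ]; exact hT)⟩

/-- iPLV(Λ) = iPLV'(Λ) for finite nonempty subformula-closed Λ. -/
theorem ipl_iPLV_eq_iPLV' (Λ : Set IF) (hfin : Λ.Finite) (hne : Λ.Nonempty)
    (hcl : SubClosedI Λ) :
    iPLV Λ = iPLV' Λ := by
  apply Set.Subset.antisymm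
  · rintro v ⟨S, hS, hvS⟩
    have hG : GoodS S Λ := hS
    refine ⟨hG.1 v hvS, ?_⟩
    intro α hα hU
    obtain ⟨w, hwS, hwF, hwT⟩ := hG.2 v hvS α hα hU
    refine ⟨Vv S Λ w, ?_, ?_, ?_⟩
    · exact Set.mem_iInter.mpr (fun k => Vv_mem_level S Λ hG k w hwS)
    · rw [Vv_agree S Λ hcl hG hwS α hα]; exact hwF
    · intro β hβ hT
      rw [Vv_agree S Λ hcl hG hwS β hβ]
      exact hwT β hβ hT
  · intro v hv
    refine ⟨iPLV' Λ ∪ S0 Λ, ⟨?_, ?_⟩, Or.inl hv⟩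
    · rintro x (hx | hx)
      exacts [hx.1, hx.1]
    · rintro x (hx | hx) α hα hU
      · obtain ⟨w, hwL, hwF, hwT⟩ := hx.2 α hα hU
        exact ⟨w, Or.inr (LIPL_subset_S0 Λ hwL), hwF, hwT⟩
      · obtain ⟨w, hwS0, hwF, hwT⟩ := S0_closed Λ hfin x hx α hα hU
        exact ⟨w, Or.inr hwS0, hwF, hwT⟩
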